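/- Let a directed graph on nodes {0,1,...,N} contain a directed spanning tree rooted at node 0, and partition its Laplacian as L̂ = [[0, 0], [L̂₂, L̂₁]] with L̂₁ ∈ ℝ^{N×N}. Then L̂₁ is a nonsingular M-matrix. -/

import Mathlib

open Matrix Finset

/-!
The follower block `L̂₁` is a Z-matrix whose row sums `a i 0 + a i i` are nonnegative, positive
exactly at the followers that hear the leader. A discrete maximum principle then shows that
`L̂₁` is nonsingular: at a positive maximum of a vector `v` with `L̂₁ v ≤ 0` the row sum vanishes
and the maximum spreads to every in-neighbour, so following the spanning tree back to the leader
reaches a row with positive sum, a contradiction. Gershgorin's theorem puts every eigenvalue in a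
disc `‖μ - d‖ ≤ d` with `d ≥ 0`, which meets the imaginary axis only at `0`, and `0` is excluded by
nonsingularity.
-/

theorem Complex.re_pos_of_norm_sub_ofReal_le {μ : ℂ} {d : ℝ} (h : ‖μ - d‖ ≤ d) (hμ : μ ≠ 0) :
    0 < μ.re := by
  have hd : 0 ≤ d := (norm_nonneg _).trans h
  have hsq : (μ.re - d) ^ 2 + μ.im ^ 2 ≤ d ^ 2 := by
    have := pow_le_pow_left₀ (norm_nonneg _) h 2
    rwa [Complex.sq_norm, Complex.normSq_apply, sub_re, sub_im, ofReal_re, ofReal_im, sub_zero,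
      ← sq, ← sq] at this
  by_contra! hre
  have hzero : μ.re ^ 2 + μ.im ^ 2 ≤ 0 := by nlinarith
  exact hμ (Complex.ext (by rw [zero_re]; nlinarith [sq_nonneg μ.im])
    (by rw [zero_im]; nlinarith [sq_nonneg μ.re]))

namespace Matrix

variable {ι : Type*} [Fintype ι] {M : Matrix ι ι ℝ}

theorem rowSum_eq_zero_and_eq_of_isMax_of_mulVec_nonpos (hoff : ∀ i j, i ≠ j → M i j ≤ 0)
    (hrow : ∀ i, 0 ≤ ∑ j, M i j) {v : ι → ℝ} {i : ι} (hmax : ∀ j, v j ≤ v i) (hpos : 0 < v i)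
    (hMv : (M *ᵥ v) i ≤ 0) : ∑ j, M i j = 0 ∧ ∀ j, M i j ≠ 0 → v j = v i := by
  -- every term of `∑ j, M i j * (v i - v j)` is `≤ 0`,
  -- while the sum equals `v i * ∑ j, M i j - (M *ᵥ v) i ≥ 0`
  have hterm : ∀ j, M i j * (v i - v j) ≤ 0 := by
    intro j
    by_cases hij : i = j
    · simp [hij]
    · exact mul_nonpos_of_nonpos_of_nonneg (hoff i j hij) (sub_nonneg.2 (hmax j))
  have hsplit : ∑ j, M i j * (v i - v j) = v i * ∑ j, M i j - (M *ᵥ v) i := by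
    simp only [mulVec, dotProduct, mul_sub, sum_sub_distrib, mul_sum, mul_comm]
  have hsum_nonpos : ∑ j, M i j * (v i - v j) ≤ 0 := sum_nonpos fun j _ => hterm j
  have hrow_i : ∑ j, M i j = 0 :=
    le_antisymm (nonpos_of_mul_nonpos_right (by linarith) hpos) (hrow i)
  have hsum : ∑ j, M i j * (v i - v j) = 0 := by
    rw [hsplit, hrow_i, mul_zero] at hsum_nonpos ⊢
    linarith
  refine ⟨hrow_i, fun j hj => ?_⟩
  have := (sum_eq_zero_iff_of_nonpos fun j _ => hterm j).1 hsum j (mem_univ j)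
  linarith [(mul_eq_zero.1 this).resolve_left hj]

theorem nonpos_of_mulVec_nonpos (hoff : ∀ i j, i ≠ j → M i j ≤ 0) (hrow : ∀ i, 0 ≤ ∑ j, M i j)
    (hreach : ∀ i, ∃ k, Relation.ReflTransGen (fun i j => M i j ≠ 0) i k ∧ 0 < ∑ j, M k j)
    {v : ι → ℝ} (hMv : ∀ i, (M *ᵥ v) i ≤ 0) (i : ι) : v i ≤ 0 := by
  by_contra! hvi
  have : Nonempty ι := ⟨i⟩
  obtain ⟨i₀, hmax⟩ := Finite.exists_max v
  obtain ⟨k, hpath, hk⟩ := hreach i₀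
  have hpos : 0 < v i₀ := hvi.trans_le (hmax i)
  have hspread : ∀ l, Relation.ReflTransGen (fun i j => M i j ≠ 0) i₀ l → v l = v i₀ := by
    intro l hl
    induction hl with
    | refl => rfl
    | @tail j l _ hjl ih =>
      have hmax_j : ∀ l, v l ≤ v j := fun l => ih ▸ hmax l
      exact ((rowSum_eq_zero_and_eq_of_isMax_of_mulVec_nonpos hoff hrow hmax_j (ih ▸ hpos)
        (hMv j)).2 l hjl).trans ih
  have hvk := hspread k hpath
  have hmax_k : ∀ l, v l ≤ v k := fun l => hvk ▸ hmax l
  exact hk.ne' (rowSum_eq_zero_and_eq_of_isMax_of_mulVec_nonpos hoff hrow hmax_k (hvk ▸ hpos)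
    (hMv k)).1

theorem det_ne_zero_of_reaches_pos_rowSum [DecidableEq ι] (hoff : ∀ i j, i ≠ j → M i j ≤ 0)
    (hrow : ∀ i, 0 ≤ ∑ j, M i j)
    (hreach : ∀ i, ∃ k, Relation.ReflTransGen (fun i j => M i j ≠ 0) i k ∧ 0 < ∑ j, M k j) :
    M.det ≠ 0 := by
  rw [Ne, ← exists_mulVec_eq_zero_iff]
  rintro ⟨v, hv0, hv⟩
  refine hv0 (funext fun i => le_antisymm ?_ ?_)
  · exact nonpos_of_mulVec_nonpos hoff hrow hreach (by simp [hv]) i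
  · exact neg_nonpos.1
      (nonpos_of_mulVec_nonpos hoff hrow hreach (v := -v) (by simp [mulVec_neg, hv]) i)

theorem sum_erase_norm_le_diag [DecidableEq ι] (hoff : ∀ i j, i ≠ j → M i j ≤ 0)
    (hrow : ∀ i, 0 ≤ ∑ j, M i j) (k : ι) : ∑ j ∈ univ.erase k, ‖(M k j : ℂ)‖ ≤ M k k := by
  have hnorm : ∀ j ∈ univ.erase k, ‖(M k j : ℂ)‖ = -M k j := fun j hj => by
    rw [Complex.norm_real, Real.norm_of_nonpos (hoff k j (ne_of_mem_erase hj).symm)]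
  rw [sum_congr rfl hnorm, sum_neg_distrib]
  linarith [hrow k, add_sum_erase univ (M k) (mem_univ k)]

theorem re_pos_of_mulVec_eq_smul (hoff : ∀ i j, i ≠ j → M i j ≤ 0) (hrow : ∀ i, 0 ≤ ∑ j, M i j)
    (hreach : ∀ i, ∃ k, Relation.ReflTransGen (fun i j => M i j ≠ 0) i k ∧ 0 < ∑ j, M k j)
    {μ : ℂ} {v : ι → ℂ} (hv0 : v ≠ 0) (hv : M.map Complex.ofReal *ᵥ v = μ • v) : 0 < μ.re := by
  classical
  have hμ : μ ≠ 0 := by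
    rintro rfl
    refine det_ne_zero_of_reaches_pos_rowSum hoff hrow hreach ?_
    rw [← Complex.ofReal_eq_zero, ← Complex.ofRealHom_eq_coe,
      RingHom.map_det, ← exists_mulVec_eq_zero_iff]
    exact ⟨v, hv0, (by simpa using hv : M.map Complex.ofReal *ᵥ v = 0)⟩
  have heig : Module.End.HasEigenvalue (toLin' (M.map Complex.ofReal)) μ :=
    Module.End.hasEigenvalue_of_hasEigenvector ⟨Module.End.mem_eigenspace_iff.2 hv, hv0⟩
  obtain ⟨k, hk⟩ := eigenvalue_mem_ball heig
  rw [Metric.mem_closedBall, dist_eq_norm] at hk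
  exact Complex.re_pos_of_norm_sub_ofReal_le (hk.trans (sum_erase_norm_le_diag hoff hrow k)) hμ

/-- `a i j` is the weight with which node `i` receives from node `j`. -/
def laplacian [DecidableEq ι] (a : Matrix ι ι ℝ) : Matrix ι ι ℝ :=
  fun i j => if i = j then ∑ k, a i k else -a i j

theorem sum_laplacian_row [DecidableEq ι] (a : Matrix ι ι ℝ) (i : ι) :
    ∑ j, laplacian a i j = a i i := by
  have hdiag : laplacian a i i = ∑ k, a i k := if_pos rfl
  have hoff : ∀ j ∈ univ.erase i, laplacian a i j = -a i j := fun j hj =>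
    if_neg (ne_of_mem_erase hj).symm
  rw [← add_sum_erase _ _ (mem_univ i), sum_congr rfl hoff, sum_neg_distrib, hdiag,
    ← add_sum_erase _ (a i) (mem_univ i)]
  ring

variable {N : ℕ} {a : Matrix (Fin (N + 1)) (Fin (N + 1)) ℝ}

theorem sum_laplacian_submatrix_succ_row (i : Fin N) :
    ∑ j, (laplacian a).submatrix Fin.succ Fin.succ i j = a i.succ 0 + a i.succ i.succ := by
  have h := sum_laplacian_row a i.succ
  rw [Fin.sum_univ_succ, laplacian, if_neg (Fin.succ_ne_zero i)] at h
  simp only [submatrix_apply]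
  linarith

theorem exists_reflTransGen_laplacian_submatrix_succ {u : Fin (N + 1)}
    (hpath : Relation.ReflTransGen (fun u v => a v u ≠ 0) 0 u) (j : Fin N) (hu : u = j.succ) :
    ∃ k, Relation.ReflTransGen (fun i j => (laplacian a).submatrix Fin.succ Fin.succ i j ≠ 0)
      j k ∧ a k.succ 0 ≠ 0 := by
  induction hpath generalizing j with
  | refl => exact absurd hu.symm (Fin.succ_ne_zero j)
  | @tail b c _ hbc ih =>
    subst hu
    rcases Fin.eq_zero_or_eq_succ b with rfl | ⟨j', rfl⟩
    · exact ⟨j, .refl, hbc⟩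
    obtain ⟨k, hk, hk0⟩ := ih j' rfl
    by_cases hjj : j = j'
    · exact hjj ▸ ⟨k, hk, hk0⟩
    · refine ⟨k, hk.head ?_, hk0⟩
      simpa [laplacian, hjj] using hbc

end Matrix

theorem follower_block_M_matrix_general (N : ℕ)
    (a : Matrix (Fin (N + 1)) (Fin (N + 1)) ℝ)
    (h01 : ∀ i j, a i j = 0 ∨ a i j = 1)
    (htree : ∀ i : Fin (N + 1), Relation.ReflTransGen (fun u v => a v u ≠ 0) 0 i) :
    let L : Matrix (Fin (N + 1)) (Fin (N + 1)) ℝ :=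
      fun i j => if i = j then ∑ k, a i k else -a i j
    let L1 : Matrix (Fin N) (Fin N) ℝ := fun i j => L i.succ j.succ
    (∀ i j, i ≠ j → L1 i j ≤ 0) ∧
      ∀ μ : ℂ, (∃ v : Fin N → ℂ, v ≠ 0 ∧ (L1.map Complex.ofReal) *ᵥ v = μ • v) →
        0 < μ.re := by
  show let L1 := (laplacian a).submatrix Fin.succ Fin.succ; _
  intro L1
  have ha : ∀ i j, 0 ≤ a i j := fun i j => by rcases h01 i j with h | h <;> simp [h]
  have hoff : ∀ i j, i ≠ j → L1 i j ≤ 0 := fun i j hij => by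
    simpa [L1, laplacian, hij] using ha i.succ j.succ
  have hrow : ∀ i, 0 ≤ ∑ j, L1 i j := fun i => by
    rw [sum_laplacian_submatrix_succ_row]
    exact add_nonneg (ha _ _) (ha _ _)
  have hreach : ∀ i, ∃ k, Relation.ReflTransGen (fun i j => L1 i j ≠ 0) i k ∧ 0 < ∑ j, L1 k j :=
    fun i => by
      obtain ⟨k, hik, hk0⟩ := exists_reflTransGen_laplacian_submatrix_succ (htree i.succ) i rfl
      refine ⟨k, hik, ?_⟩
      rw [sum_laplacian_submatrix_succ_row]
      exact add_pos_of_pos_of_nonneg ((ha _ _).lt_of_ne' hk0) (ha _ _)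
  exact ⟨hoff, fun μ ⟨v, hv0, hv⟩ => re_pos_of_mulVec_eq_smul hoff hrow hreach hv0 hv⟩

/-- If a leader-follower digraph on nodes {0,...,N} contains a directed spanning tree
    rooted at the leader (node 0, which has no incoming edges), then the follower
    block L̂₁ of the Laplacian is a nonsingular M-matrix. -/
theorem follower_block_M_matrix (N : ℕ)
    (a : Matrix (Fin (N + 1)) (Fin (N + 1)) ℝ)
    (hdiag : ∀ i, a i i = 0) (h01 : ∀ i j, a i j = 0 ∨ a i j = 1)
    (hleader : ∀ j, a 0 j = 0)
    (htree : ∀ i : Fin (N + 1), Relation.ReflTransGen (fun u v => a v u ≠ 0) 0 i) :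
    let L : Matrix (Fin (N + 1)) (Fin (N + 1)) ℝ :=
      fun i j => if i = j then ∑ k, a i k else -a i j
    let L1 : Matrix (Fin N) (Fin N) ℝ := fun i j => L i.succ j.succ
    (∀ i j, i ≠ j → L1 i j ≤ 0) ∧
      ∀ μ : ℂ, (∃ v : Fin N → ℂ, v ≠ 0 ∧ (L1.map Complex.ofReal) *ᵥ v = μ • v) →
        0 < μ.re :=
  follower_block_M_matrix_general N a h01 htree
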